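/- Let f ∈ L¹(ℝ) and (δₙ) be a delta sequence. Then H(f # δₙ) → H(f) uniformly on every compact subset of ℝ. -/

import Mathlib

open MeasureTheory Real Filter Topology

noncomputable def hash (f g : ℝ → ℝ) : ℝ → ℝ :=
  fun x => (1/2) * ∫ y, (f (x + y) + f (x - y)) * g y

noncomputable def hartley (f : ℝ → ℝ) : ℝ → ℝ :=
  fun t => (1 / Real.sqrt (2 * Real.pi)) * ∫ x, f x * (Real.cos (x * t) + Real.sin (x * t))

noncomputable def cosT (f : ℝ → ℝ) : ℝ → ℝ :=
  fun t => ∫ x, f x * Real.cos (x * t)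

noncomputable def fourierT (f : ℝ → ℝ) : ℝ → ℂ :=
  fun t => (1 / Real.sqrt (2 * Real.pi) : ℂ) * ∫ x, (f x : ℂ) * Complex.exp (-Complex.I * x * t)

/-!
Writing `cas θ = cos θ + sin θ`, the addition formulas give
`cas ((x - y) t) + cas ((x + y) t) = 2 cos (y t) cas (x t)`, so by Fubini and translation
invariance `H(f # g)(t) = H(f)(t) · ∫ cos (y t) g(y) dy`. Hence
`|H(f # δₙ)(t) - H(f)(t)| ≤ |H(f)(t)| · ∫ |cos (y t) - 1| |δₙ(y)| dy ≤ 2‖f‖₁ · |t| |εₙ| M`,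
which is uniformly small for `t` in a bounded set.
-/

noncomputable def cas (θ : ℝ) : ℝ := cos θ + sin θ

lemma abs_cas_le (θ : ℝ) : |cas θ| ≤ 2 := by
  unfold cas
  linarith [abs_add_le (cos θ) (sin θ), abs_cos_le_one θ, abs_sin_le_one θ]

lemma continuous_cas : Continuous cas := continuous_cos.add continuous_sin

lemma cas_sub_add_cas_add (a b : ℝ) : cas (a - b) + cas (a + b) = 2 * cos b * cas a := by
  simp only [cas, cos_sub, sin_sub, cos_add, sin_add]
  ring

lemma hartley_eq_integral_mul_cas (f : ℝ → ℝ) (t : ℝ) :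
    hartley f t = 1 / √(2 * π) * ∫ x, f x * cas (x * t) := rfl

lemma MeasureTheory.Integrable.mul_cas_comp {f φ : ℝ → ℝ} (hf : Integrable f) (hφ : Continuous φ) :
    Integrable (fun x => f x * cas (φ x)) :=
  hf.mul_bdd (continuous_cas.comp hφ).aestronglyMeasurable (.of_forall fun _ => abs_cas_le _)

lemma integral_translates_mul_cas {f : ℝ → ℝ} (hf : Integrable f) (y t : ℝ) :
    ∫ x, (f (x + y) + f (x - y)) * cas (x * t) = 2 * cos (y * t) * ∫ x, f x * cas (x * t) := by
  have h_add : ∫ x, f (x + y) * cas (x * t) = ∫ x, f x * cas ((x - y) * t) := by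
    simpa using (integral_sub_right_eq_self (fun x => f (x + y) * cas (x * t)) y).symm
  have h_sub : ∫ x, f (x - y) * cas (x * t) = ∫ x, f x * cas ((x + y) * t) := by
    simpa using (integral_add_right_eq_self (fun x => f (x - y) * cas (x * t)) y).symm
  calc ∫ x, (f (x + y) + f (x - y)) * cas (x * t)
      = ∫ x, f (x + y) * cas (x * t) + f (x - y) * cas (x * t) := by simp only [add_mul]
    _ = ∫ x, f x * cas ((x - y) * t) + f x * cas ((x + y) * t) := by
      rw [integral_add (Integrable.mul_cas_comp (hf.comp_add_right y) (by fun_prop))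
        (Integrable.mul_cas_comp (hf.comp_sub_right y) (by fun_prop)), h_add, h_sub,
        integral_add (hf.mul_cas_comp (by fun_prop)) (hf.mul_cas_comp (by fun_prop))]
    _ = ∫ x, 2 * cos (y * t) * (f x * cas (x * t)) := by
      congr 1 with x
      rw [← mul_add, sub_mul, add_mul, cas_sub_add_cas_add]
      ring
    _ = 2 * cos (y * t) * ∫ x, f x * cas (x * t) := integral_const_mul _ _

lemma integrable_translates_mul_prod {f g : ℝ → ℝ} (hf : Integrable f) (hg : Integrable g) :
    Integrable (fun p : ℝ × ℝ => (f (p.1 + p.2) + f (p.1 - p.2)) * g p.2)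
      (volume.prod volume) := by
  simp only [add_mul]
  exact ((measurePreserving_add_prod volume volume).integrable_comp_of_integrable
      (hf.mul_prod hg)).add
    ((measurePreserving_sub_prod volume volume).integrable_comp_of_integrable (hf.mul_prod hg))

lemma integral_hash_mul {f g φ : ℝ → ℝ} (hf : Integrable f) (hg : Integrable g)
    (hφ : AEStronglyMeasurable φ) {C : ℝ} (hφC : ∀ x, |φ x| ≤ C) :
    ∫ x, hash f g x * φ x = 1 / 2 * ∫ y, g y * ∫ x, (f (x + y) + f (x - y)) * φ x := by
  have h_int : Integrable (Function.uncurry fun x y => (f (x + y) + f (x - y)) * g y * φ x)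
      (volume.prod volume) :=
    (integrable_translates_mul_prod hf hg).mul_bdd (hφ.comp_fst) (.of_forall fun p => hφC p.1)
  calc ∫ x, hash f g x * φ x
      = ∫ x, 1 / 2 * ∫ y, (f (x + y) + f (x - y)) * g y * φ x := by
        congr 1 with x
        rw [_root_.hash, mul_assoc, ← integral_mul_const]
    _ = 1 / 2 * ∫ y, ∫ x, (f (x + y) + f (x - y)) * g y * φ x := by
        rw [integral_const_mul, integral_integral_swap h_int]
    _ = 1 / 2 * ∫ y, g y * ∫ x, (f (x + y) + f (x - y)) * φ x := by
        simp only [← integral_const_mul (g _)]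
        congr 2 with y
        congr 1 with x
        ring

lemma hartley_hash {f g : ℝ → ℝ} (hf : Integrable f) (hg : Integrable g) (t : ℝ) :
    hartley (hash f g) t = hartley f t * ∫ y, cos (y * t) * g y := by
  rw [hartley_eq_integral_mul_cas, hartley_eq_integral_mul_cas,
    integral_hash_mul (φ := fun x => cas (x * t)) hf hg
      (continuous_cas.comp (by fun_prop)).aestronglyMeasurable (fun x => abs_cas_le (x * t))]
  simp only [integral_translates_mul_cas hf]
  rw [← integral_const_mul (1 / √(2 * π) * ∫ x, f x * cas (x * t)), ← integral_const_mul (1 / 2),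
    ← integral_const_mul (1 / √(2 * π))]
  congr 1 with y
  ring

lemma abs_hartley_le {f : ℝ → ℝ} (hf : Integrable f) (t : ℝ) :
    |hartley f t| ≤ 2 * ∫ x, |f x| := by
  have h_sqrt : 1 ≤ √(2 * π) := one_le_sqrt.mpr (by linarith [two_le_pi])
  have h_int : ‖∫ x, f x * cas (x * t)‖ ≤ 2 * ∫ x, |f x| := by
    rw [← integral_const_mul]
    refine norm_integral_le_of_norm_le (hf.abs.const_mul 2) (.of_forall fun x => ?_)
    rw [norm_mul, mul_comm]
    exact mul_le_mul_of_nonneg_right (abs_cas_le _) (abs_nonneg _)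
  rw [hartley_eq_integral_mul_cas, abs_mul, abs_of_nonneg (by positivity), ← Real.norm_eq_abs]
  calc 1 / √(2 * π) * ‖∫ x, f x * cas (x * t)‖ ≤ 1 * (2 * ∫ x, |f x|) :=
        mul_le_mul (div_le_one_of_le₀ h_sqrt (by positivity)) h_int (norm_nonneg _) zero_le_one
    _ = 2 * ∫ x, |f x| := one_mul _

lemma abs_integral_cos_mul_sub_integral_le {δ : ℝ → ℝ} (hδ : Integrable δ) {ε : ℝ}
    (hsupp : Function.support δ ⊆ Set.Icc (-ε) ε) (t : ℝ) :
    |(∫ y, cos (y * t) * δ y) - ∫ y, δ y| ≤ |t| * |ε| * ∫ y, |δ y| := by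
  have h_pt : ∀ y, |(cos (y * t) - 1) * δ y| ≤ |t| * |ε| * |δ y| := by
    intro y
    by_cases hy : δ y = 0
    · simp [hy]
    have hy_le : |y| ≤ |ε| := (abs_le.mpr (hsupp hy)).trans (le_abs_self ε)
    have h_cos : |cos (y * t) - 1| ≤ |y| * |t| := by
      simpa [abs_mul] using abs_cos_sub_cos_le (y * t) 0
    rw [abs_mul]
    gcongr
    exact h_cos.trans (by rw [mul_comm]; gcongr)
  have h_cos_int : Integrable (fun y => cos (y * t) * δ y) :=
    hδ.bdd_mul (by fun_prop) (.of_forall fun y => abs_cos_le_one _)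
  rw [← integral_sub h_cos_int hδ, ← integral_const_mul, ← Real.norm_eq_abs]
  refine norm_integral_le_of_norm_le (hδ.abs.const_mul _) (.of_forall fun y => ?_)
  simpa [sub_mul] using h_pt y

lemma tendstoUniformlyOn_of_dist_le {α β ι : Type*} [PseudoMetricSpace β] {F : ι → α → β}
    {f : α → β} {l : Filter ι} {s : Set α} {b : ι → ℝ} (hb : Tendsto b l (𝓝 0))
    (h : ∀ i, ∀ x ∈ s, dist (f x) (F i x) ≤ b i) : TendstoUniformlyOn F f l s := by
  rw [Metric.tendstoUniformlyOn_iff]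
  intro r hr
  filter_upwards [hb.eventually_lt_const hr] with i hi x hx
  exact (h i x hx).trans_lt hi

theorem stmt17_general (f : ℝ → ℝ) (hf : Integrable f)
    (δ : ℕ → ℝ → ℝ) (M : ℝ) (ε : ℕ → ℝ)
    (hint : ∀ n, Integrable (δ n))
    (h1 : ∀ n, ∫ x, δ n x = 1)
    (h2 : ∀ n, (∫ x, |δ n x|) ≤ M)
    (hsupp : ∀ n, Function.support (δ n) ⊆ Set.Icc (-(ε n)) (ε n))
    (hε : Tendsto ε atTop (𝓝 0)) :
    ∀ K : Set ℝ, IsCompact K →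
      TendstoUniformlyOn (fun n t => hartley (hash f (δ n)) t) (hartley f) atTop K := by
  intro K hK
  obtain ⟨T, hT_pos, hT⟩ := hK.isBounded.exists_pos_norm_le
  refine tendstoUniformlyOn_of_dist_le (b := fun n => 2 * (∫ x, |f x|) * (T * |ε n| * M))
    (by simpa using (hε.abs.const_mul T |>.mul_const M).const_mul (2 * ∫ x, |f x|))
    fun n t ht => ?_
  have h_kernel := abs_integral_cos_mul_sub_integral_le (hint n) (hsupp n) t
  rw [h1 n] at h_kernel
  calc dist (hartley f t) (hartley (hash f (δ n)) t)
      = |hartley f t| * |(∫ y, cos (y * t) * δ n y) - 1| := by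
        rw [hartley_hash hf (hint n), dist_eq, ← abs_mul, abs_sub_comm]
        congr 1
        ring
    _ ≤ 2 * (∫ x, |f x|) * (T * |ε n| * M) := by
        gcongr
        · exact abs_hartley_le hf t
        · calc _ ≤ |t| * |ε n| * ∫ y, |δ n y| := h_kernel
            _ ≤ T * |ε n| * M := by
              gcongr
              exacts [hT t ht, h2 n]

theorem stmt17 (f : ℝ → ℝ) (hf : Integrable f)
    (δ : ℕ → ℝ → ℝ) (M : ℝ) (ε : ℕ → ℝ)
    (hint : ∀ n, Integrable (δ n))
    (h1 : ∀ n, ∫ x, δ n x = 1)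
    (hM : 0 < M) (h2 : ∀ n, (∫ x, |δ n x|) ≤ M)
    (hsupp : ∀ n, Function.support (δ n) ⊆ Set.Icc (-(ε n)) (ε n))
    (hε : Tendsto ε atTop (𝓝 0)) :
    ∀ K : Set ℝ, IsCompact K →
      TendstoUniformlyOn (fun n t => hartley (hash f (δ n)) t) (hartley f) atTop K :=
  stmt17_general f hf δ M ε hint h1 h2 hsupp hε
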